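/- arXiv:1405.0789 — 8 statements merged into one kernel-verified Lean document; each statement's English description precedes it below -/
import Mathlib

section
/- Let m be a positive integer and z_1,...,z_m real numbers. Fix x ∈ ℝ and define p(k) = x + Σ_{i=1}^k z_i for k = 0,...,m. Let a = min_k p(k) and b = max_k p(k), and y = p(m). Then max_{k=1,...,m} |Σ_{i=1}^k z_i − Σ_{i=k+1}^m z_i| = max{2b − x − y, x + y − 2a}. -/
/-!
Writing `S k = ∑_{i<k} z i`, the `k`-th difference is `S k - (S m - S k) = 2 p k - x - y`. Its
absolute value is `max (2 p k - x - y) (x + y - 2 p k)`, and the two terms are maximised at the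
maximum `b` and the minimum `a` of `p`. The index `k = 0` is missing on the left, but it gives
`|x - y|`, the same value as `k = m`.
-/

open Finset

namespace Finset

lemma sup'_abs_eq_max_neg_inf' {ι α : Type*} [AddCommGroup α] [LinearOrder α]
    [IsOrderedAddMonoid α] {s : Finset ι} (hs : s.Nonempty) (f : ι → α) :
    s.sup' hs (fun i => |f i|) = max (s.sup' hs f) (-s.inf' hs f) :=
  eq_of_forall_ge_iff fun c => by simp [abs_le, neg_le, forall_and, and_comm]

lemma sup'_Icc_one_eq_sup'_range_add_one {α : Type*} [SemilatticeSup α] {m : ℕ} (hm : 1 ≤ m)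
    (f : ℕ → α) (hf : f 0 = f m) :
    (Icc 1 m).sup' (nonempty_Icc.mpr hm) f = (range (m + 1)).sup' nonempty_range_add_one f := by
  have hrange : range (m + 1) = insert 0 (Icc 1 m) := by
    rw [Nat.range_succ_eq_Icc_zero, ← insert_Icc_add_one_left_eq_Icc m.zero_le, zero_add]
  rw [sup'_congr nonempty_range_add_one hrange fun _ _ => rfl, sup'_insert (nonempty_Icc.mpr hm),
    hf, sup_eq_right.mpr (le_sup' f (right_mem_Icc.mpr hm))]

lemma sum_range_sub_sum_Ico {R : Type*} [Ring R] (z : ℕ → R) {k m : ℕ} (hkm : k ≤ m) :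
    ∑ i ∈ range k, z i - ∑ i ∈ Ico k m, z i = 2 * ∑ i ∈ range k, z i - ∑ i ∈ range m, z i := by
  rw [sum_Ico_eq_sub z hkm, two_mul]
  abel

end Finset

theorem stmt_1 (m : ℕ) (hm : 1 ≤ m) (z : ℕ → ℝ) (x : ℝ)
    (p : ℕ → ℝ) (hp : ∀ k, p k = x + ∑ i ∈ Finset.range k, z i)
    (a b y : ℝ)
    (ha : a = (Finset.range (m + 1)).inf' Finset.nonempty_range_add_one p)
    (hb : b = (Finset.range (m + 1)).sup' Finset.nonempty_range_add_one p)
    (hy : y = p m) :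
    (Finset.Icc 1 m).sup' (Finset.nonempty_Icc.mpr hm)
        (fun k => |(∑ i ∈ Finset.range k, z i) - ∑ i ∈ Finset.Ico k m, z i|)
      = max (2 * b - x - y) (x + y - 2 * a) := by
  set g : ℝ → ℝ := fun t => 2 * t - x - y
  have hg : Monotone g := fun s t hst => by simp only [g]; linarith
  have hdiff : ∀ k ∈ Icc 1 m,
      |∑ i ∈ range k, z i - ∑ i ∈ Ico k m, z i| = |g (p k)| := fun k hk => by
    rw [sum_range_sub_sum_Ico z (mem_Icc.mp hk).2]
    simp only [g, hy, hp]
    ring_nf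
  have hsup : (range (m + 1)).sup' nonempty_range_add_one (g ∘ p) = g b := by
    rw [hb, apply_sup'_eq_sup'_comp _ g fun _ _ => hg.map_max]
  have hinf : (range (m + 1)).inf' nonempty_range_add_one (g ∘ p) = g a := by
    rw [ha, apply_inf'_eq_inf'_comp _ g fun _ _ => hg.map_min]
  have hends : |g (p 0)| = |g (p m)| := by
    simp only [g, hp, hy, range_zero, sum_empty]
    rw [← abs_neg]
    ring_nf
  rw [sup'_congr _ rfl hdiff, sup'_Icc_one_eq_sup'_range_add_one hm _ hends]
  refine (sup'_abs_eq_max_neg_inf' _ (g ∘ p)).trans ?_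
  rw [hsup, hinf]
  simp only [g]
  ring_nf
end

section
/- Let u_1,...,u_m, v_1,...,v_m ≥ 0 with u_i + v_i ≤ D for all i, and let x ∈ [0, D]. Then there exist z_1,...,z_m with z_k ∈ {v_k, −u_k} for all k such that every partial sum x + Σ_{i=1}^k z_i lies in [0, D] for k = 0,...,m. -/
theorem stmt_4 (m : ℕ) (hm : 1 ≤ m) (D : ℝ) (hD : 0 < D) (u v : ℕ → ℝ)
    (hu : ∀ i < m, 0 ≤ u i) (hv : ∀ i < m, 0 ≤ v i)
    (huv : ∀ i < m, u i + v i ≤ D) (x : ℝ) (hx : x ∈ Set.Icc 0 D) :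
    ∃ z : ℕ → ℝ, (∀ k < m, z k = v k ∨ z k = -u k) ∧
      ∀ k ≤ m, x + ∑ i ∈ Finset.range k, z i ∈ Set.Icc 0 D := by
  -- greedy partial sums
  let s : ℕ → ℝ := fun n => Nat.rec x
    (fun n sn => if sn + v n ≤ D then sn + v n else sn - u n) n
  have hs0 : s 0 = x := rfl
  have hsucc : ∀ n, s (n + 1) = if s n + v n ≤ D then s n + v n else s n - u n :=
    fun n => rfl
  refine ⟨fun n => if s n + v n ≤ D then v n else -u n, ?_, ?_⟩
  · intro k _
    by_cases h : s k + v k ≤ D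
    · left; simp [h]
    · right; simp [h]
  · intro k hk
    have hsum : x + ∑ i ∈ Finset.range k,
        (if s i + v i ≤ D then v i else -u i) = s k := by
      induction k with
      | zero => simp [hs0]
      | succ n ih =>
        have := ih (Nat.le_of_succ_le hk)
        rw [Finset.sum_range_succ, ← add_assoc, this, hsucc]
        by_cases h : s n + v n ≤ D <;> simp [h, sub_eq_add_neg]
    rw [hsum]
    clear hsum
    induction k with
    | zero => simpa [hs0] using hx
    | succ n ih =>
      have hn : n < m := hk
      have ih' := ih (Nat.le_of_succ_le hk)
      obtain ⟨h0, h1⟩ := ih'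
      rw [hsucc]
      by_cases h : s n + v n ≤ D
      · simp only [if_pos h]
        exact ⟨by linarith [hv n hn], h⟩
      · simp only [if_neg h]
        push_neg at h
        have := huv n hn
        exact ⟨by linarith, by linarith [hu n hn]⟩
end

section
/- Schrijver–Seymour–Winkler bound: for all positive integers m and nonnegative reals u_1,...,u_m, v_1,...,v_m with u_i + v_i ≤ 1 for every i, there exist z_1,...,z_m with z_k ∈ {v_k, −u_k} for all k such that max_{k=1,...,m} |Σ_{i=1}^k z_i − Σ_{i=k+1}^m z_i| ≤ 3/2. -/
noncomputable def sswS (u v : ℕ → ℝ) : ℕ → ℝ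
  | 0 => 0
  | k + 1 => if sswS u v k + v k ≤ 1 / 2 then sswS u v k + v k else sswS u v k - u k

theorem stmt_6 (m : ℕ) (hm : 1 ≤ m) (u v : ℕ → ℝ)
    (hu : ∀ i < m, 0 ≤ u i) (hv : ∀ i < m, 0 ≤ v i)
    (huv : ∀ i < m, u i + v i ≤ 1) :
    ∃ z : ℕ → ℝ, (∀ k < m, z k = v k ∨ z k = -u k) ∧
      ∀ k, 1 ≤ k → k ≤ m →
        |(∑ i ∈ Finset.range k, z i) - ∑ i ∈ Finset.Ico k m, z i| ≤ 3 / 2 := by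
  set S : ℕ → ℝ := sswS u v with hS
  have hstep : ∀ k, S (k + 1) =
      if S k + v k ≤ 1 / 2 then S k + v k else S k - u k := fun k => rfl
  have hinv : ∀ k ≤ m, -(1 / 2) ≤ S k ∧ S k ≤ 1 / 2 := by
    intro k hk
    induction k with
    | zero => simp [hS, sswS]
    | succ n ih =>
      have hn : n < m := hk
      obtain ⟨h1, h2⟩ := ih (le_of_lt hn)
      rw [hstep]
      split_ifs with h
      · constructor
        · linarith [hv n hn]
        · exact h
      · constructor
        · push_neg at h
          linarith [huv n hn]
        · linarith [hu n hn]
  refine ⟨fun k => S (k + 1) - S k, ?_, ?_⟩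
  · intro k hk
    simp only []
    rw [hstep]
    split_ifs with h
    · left; ring
    · right; ring
  · intro k hk1 hk2
    have hsum : ∀ n, ∑ i ∈ Finset.range n, (S (i + 1) - S i) = S n := by
      intro n
      rw [Finset.sum_range_sub]
      simp [hS, sswS]
    have hico : ∑ i ∈ Finset.Ico k m, (S (i + 1) - S i) = S m - S k := by
      rw [Finset.sum_Ico_eq_sub _ hk2, hsum, hsum]
    rw [hsum, hico]
    obtain ⟨a1, a2⟩ := hinv k hk2
    obtain ⟨b1, b2⟩ := hinv m le_rfl
    rw [abs_le]
    constructor <;> linarith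
end

section
/- Suppose u_i + v_i ≤ D for all i, u_i, v_i ≥ 0, and there exists an index j with u_j + v_j ∈ [δD, (1−δ)D] for some 0 ≤ δ ≤ 1/2. Then there exist z_1,...,z_m with z_k ∈ {v_k, −u_k} such that max_{k=1,...,m} |Σ_{i=1}^k z_i − Σ_{i=k+1}^m z_i| ≤ (3/2 − δ/2)·D. -/
/-- Greedy sign-selection keeping suffix partial sums in a window of width `D`. -/
lemma greedy_aux (a D : ℝ) (u v : ℕ → ℝ) (ha0 : a ≤ 0) (haD : 0 ≤ a + D) (hi : ℕ) :
    ∀ n lo, lo + n = hi →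
    (∀ i, lo ≤ i → i < hi → 0 ≤ u i ∧ 0 ≤ v i ∧ u i + v i ≤ D) →
    ∃ z : ℕ → ℝ, (∀ i, lo ≤ i → i < hi → (z i = v i ∨ z i = -u i)) ∧
      ∀ k, lo ≤ k → k ≤ hi →
        a ≤ (∑ i ∈ Finset.Ico k hi, z i) ∧ (∑ i ∈ Finset.Ico k hi, z i) ≤ a + D := by
  intro n
  induction n with
  | zero =>
    intro lo hlo _
    refine ⟨fun _ => 0, fun i h1 h2 => absurd h2 (by omega), fun k hk1 hk2 => ?_⟩
    have hk : k = hi := by omega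
    subst hk
    simp only [Finset.Ico_self, Finset.sum_empty]
    exact ⟨ha0, haD⟩
  | succ n ih =>
    intro lo hlo hprops
    obtain ⟨z, hzc, hzw⟩ := ih (lo + 1) (by omega) (fun i h1 h2 => hprops i (by omega) h2)
    have hlohi : lo < hi := by omega
    obtain ⟨hu0, hv0, huv0⟩ := hprops lo le_rfl hlohi
    set t := ∑ i ∈ Finset.Ico (lo + 1) hi, z i with ht
    obtain ⟨hta, htb⟩ := hzw (lo + 1) le_rfl (by omega)
    obtain ⟨zl, hzl, hzla, hzlb⟩ :
        ∃ zl, (zl = v lo ∨ zl = -u lo) ∧ a ≤ zl + t ∧ zl + t ≤ a + D := by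
      by_cases hcase : v lo + t ≤ a + D
      · exact ⟨v lo, Or.inl rfl, by linarith, by linarith⟩
      · push_neg at hcase
        exact ⟨-u lo, Or.inr rfl, by linarith, by linarith⟩
    refine ⟨Function.update z lo zl, ?_, ?_⟩
    · intro i h1 h2
      rcases eq_or_lt_of_le h1 with hlt | hlt
      · rw [← hlt, Function.update_self]
        exact hzl
      · rw [Function.update_of_ne (by omega)]
        exact hzc i (by omega) h2
    · intro k hk1 hk2
      rcases eq_or_lt_of_le hk1 with rfl | hlt
      · rw [Finset.sum_eq_sum_Ico_succ_bot hlohi, Function.update_self]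
        have e : ∑ i ∈ Finset.Ico (lo + 1) hi, Function.update z lo zl i = t := by
          rw [ht]
          refine Finset.sum_congr rfl fun i hi2 => ?_
          simp only [Finset.mem_Ico] at hi2
          exact Function.update_of_ne (by omega) _ _
        rw [e]
        exact ⟨hzla, hzlb⟩
      · have e : ∑ i ∈ Finset.Ico k hi, Function.update z lo zl i
            = ∑ i ∈ Finset.Ico k hi, z i := by
          refine Finset.sum_congr rfl fun i hi2 => ?_
          simp only [Finset.mem_Ico] at hi2
          exact Function.update_of_ne (by omega) _ _
        rw [e]
        exact hzw k (by omega) hk2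

theorem stmt_7 (m : ℕ) (hm : 1 ≤ m) (D δ : ℝ) (hD : 0 < D)
    (hδ0 : 0 ≤ δ) (hδ1 : δ ≤ 1 / 2) (u v : ℕ → ℝ)
    (hu : ∀ i < m, 0 ≤ u i) (hv : ∀ i < m, 0 ≤ v i)
    (huv : ∀ i < m, u i + v i ≤ D)
    (j : ℕ) (hj : j < m)
    (hmed : u j + v j ∈ Set.Icc (δ * D) ((1 - δ) * D)) :
    ∃ z : ℕ → ℝ, (∀ k < m, z k = v k ∨ z k = -u k) ∧
      ∀ k, 1 ≤ k → k ≤ m →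
        |(∑ i ∈ Finset.range k, z i) - ∑ i ∈ Finset.Ico k m, z i|
          ≤ (3 / 2 - δ / 2) * D := by
  obtain ⟨hmed1, hmed2⟩ := hmed
  set h : ℝ := (1 - δ) * D / 2 with hh
  have hh0 : 0 ≤ h := by
    have : 0 ≤ (1 - δ) * D := mul_nonneg (by linarith) hD.le
    linarith
  have huj : 0 ≤ u j := hu j hj
  have hvj : 0 ≤ v j := hv j hj
  set p : ℝ := min 0 (u j + h - D) with hp
  have hp0 : p ≤ 0 := min_le_left _ _
  have hp_le : p ≤ u j + h - D := min_le_right _ _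
  have hp_ge : -(v j) - h ≤ p := by
    refine le_min (by linarith) ?_
    -- u j + v j ≥ δ * D = D - 2h
    have : δ * D = D - 2 * h := by rw [hh]; ring
    linarith
  have hpD : 0 ≤ p + D := by
    have : -D ≤ p := le_min (by linarith) (by linarith)
    linarith
  -- prefix greedy on [0, j)
  obtain ⟨z1, hz1c, hz1w⟩ := greedy_aux p D u v hp0 hpD j j 0 (by omega)
    (fun i h1 h2 => ⟨hu i (by omega), hv i (by omega), huv i (by omega)⟩)
  set s := ∑ i ∈ Finset.Ico 0 j, z1 i with hs
  obtain ⟨hs1, hs2⟩ := hz1w 0 le_rfl (Nat.zero_le j)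
  set c : ℝ := s - D - p with hc
  have hc0 : c ≤ 0 := by rw [hc]; linarith
  have hcD : 0 ≤ c + D := by rw [hc]; linarith
  -- suffix greedy on [j+1, m)
  obtain ⟨z2, hz2c, hz2w⟩ := greedy_aux c D u v hc0 hcD m (m - (j + 1)) (j + 1) (by omega)
    (fun i h1 h2 => ⟨hu i h2, hv i h2, huv i h2⟩)
  set r := ∑ i ∈ Finset.Ico (j + 1) m, z2 i with hr
  obtain ⟨hr1, hr2⟩ := hz2w (j + 1) le_rfl (by omega)
  -- choose z at j
  obtain ⟨zj, hzjc, hTlo, hThi⟩ :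
      ∃ zj, (zj = v j ∨ zj = -u j) ∧
        2 * (s - p) - D - h ≤ s + zj + r ∧ s + zj + r ≤ 2 * (s - p) - D + h := by
    have hA : 2 * (s - p) - D - h - s - r ≤ v j := by
      rw [hc] at hr1
      linarith
    have hB : -(u j) ≤ 2 * (s - p) - D + h - s - r := by
      rw [hc] at hr2
      linarith
    by_cases hcase : v j ≤ 2 * (s - p) - D + h - s - r
    · exact ⟨v j, Or.inl rfl, by linarith, by linarith⟩
    · push_neg at hcase
      have hd2h : u j + v j ≤ 2 * h := by
        have : (1 - δ) * D = 2 * h := by rw [hh]; ring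
        linarith
      exact ⟨-u j, Or.inr rfl, by linarith, by linarith⟩
  set Z : ℕ → ℝ := fun i => if i < j then z1 i else if i = j then zj else z2 i with hZ
  have hZpre : ∀ i, i < j → Z i = z1 i := by
    intro i hij
    simp only [hZ]
    rw [if_pos hij]
  have hZj : Z j = zj := by simp [hZ]
  have hZsuf : ∀ i, j < i → Z i = z2 i := by
    intro i hij
    simp only [hZ]
    rw [if_neg (by omega), if_neg (by omega)]
  have hT : ∑ i ∈ Finset.range m, Z i = s + zj + r := by
    rw [Finset.range_eq_Ico, ← Finset.sum_Ico_consecutive Z (Nat.zero_le j) hj.le,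
      Finset.sum_eq_sum_Ico_succ_bot hj]
    have e1 : ∑ i ∈ Finset.Ico 0 j, Z i = s := by
      rw [hs]
      exact Finset.sum_congr rfl fun i hi2 => by
        simp only [Finset.mem_Ico] at hi2
        exact hZpre i hi2.2
    have e2 : ∑ i ∈ Finset.Ico (j + 1) m, Z i = r := by
      rw [hr]
      exact Finset.sum_congr rfl fun i hi2 => by
        simp only [Finset.mem_Ico] at hi2
        exact hZsuf i (by omega)
    rw [e1, e2, hZj]
    ring
  have hbound : D + h = (3 / 2 - δ / 2) * D := by rw [hh]; ring
  refine ⟨Z, ?_, ?_⟩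
  · intro k hk
    by_cases h1 : k < j
    · rw [hZpre k h1]
      exact hz1c k (Nat.zero_le k) h1
    · by_cases h2 : k = j
      · subst h2
        rw [hZj]
        exact hzjc
      · rw [hZsuf k (by omega)]
        exact hz2c k (by omega) hk
  · intro k hk1 hkm
    have hsplit : ∑ i ∈ Finset.range k, Z i + ∑ i ∈ Finset.Ico k m, Z i
        = ∑ i ∈ Finset.range m, Z i := by
      simp only [Finset.range_eq_Ico]
      exact Finset.sum_Ico_consecutive Z (Nat.zero_le k) hkm
    rw [hT] at hsplit
    rcases le_or_gt k j with hkj | hkj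
    · -- prefix cut
      have hpre : ∑ i ∈ Finset.range k, Z i = s - ∑ i ∈ Finset.Ico k j, z1 i := by
        have e2 : ∑ i ∈ Finset.Ico 0 k, z1 i + ∑ i ∈ Finset.Ico k j, z1 i = s := by
          rw [hs]; exact Finset.sum_Ico_consecutive _ (Nat.zero_le k) hkj
        have e3 : ∑ i ∈ Finset.range k, Z i = ∑ i ∈ Finset.Ico 0 k, z1 i := by
          rw [Finset.range_eq_Ico]
          exact Finset.sum_congr rfl fun i hi2 => by
            simp only [Finset.mem_Ico] at hi2
            exact hZpre i (by omega)
        linarith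
      obtain ⟨hPa, hPb⟩ := hz1w k (Nat.zero_le k) hkj
      rw [abs_le, ← hbound]
      constructor <;> linarith
    · -- suffix cut
      have hsuf : ∑ i ∈ Finset.Ico k m, Z i = ∑ i ∈ Finset.Ico k m, z2 i := by
        exact Finset.sum_congr rfl fun i hi2 => by
          simp only [Finset.mem_Ico] at hi2
          exact hZsuf i (by omega)
      obtain ⟨hCa, hCb⟩ := hz2w k (by omega) hkm
      rw [← hsuf] at hCa hCb
      rw [hc] at hCa hCb
      rw [abs_le, ← hbound]
      constructor <;> linarith
end

section
/- Crossover lemma: Let z' and z'' be two choice sequences for the same data (u_i, v_i), i.e. z'_k, z''_k ∈ {v_k, −u_k}, with associated patterns p'(k) = x' + Σ_{i≤k} z'_i living in [a', b'] and p''(k) = x'' + Σ_{i≤k} z''_i living in [a'', b''] with end point y'' = p''(m). If there exists k ∈ {0,...,m} with |p'(k) − p''(k)| ≤ ε, then there exists a choice sequence z with z_j ∈ {v_j, −u_j} for all j whose pattern p (for suitable start point x) lives in a sub-interval of [min{a',a''} − ε/2, max{b',b''} + ε/2] and satisfies p(0) + p(m) = x' + y''. -/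
/-!
Follow `z'` up to the index `k` where the two patterns are `ε`-close and `z''` afterwards, and
start at `x' + δ / 2` with `δ = p''(k) - p'(k)`. The new pattern is then `p' + δ / 2` up to `k` and
`p'' - δ / 2` from `k` on, so it leaves `[a', b']` resp. `[a'', b'']` by at most `|δ| / 2 ≤ ε / 2`,
and `p(0) + p(m) = (x' + δ / 2) + (p''(m) - δ / 2) = x' + y''`.
-/

open Finset Set

def splice {α : Type*} (k : ℕ) (z' z'' : ℕ → α) (i : ℕ) : α :=
  if i < k then z' i else z'' i

section splice

variable {α M : Type*} {k : ℕ}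

theorem splice_forall_lt {z' z'' : ℕ → α} {P : ℕ → α → Prop} {m : ℕ} (h' : ∀ i < m, P i (z' i))
    (h'' : ∀ i < m, P i (z'' i)) : ∀ i < m, P i (splice k z' z'' i) := by
  intro i hi
  unfold splice
  split_ifs
  exacts [h' i hi, h'' i hi]

variable [AddCommMonoid M] {z' z'' : ℕ → M} {j : ℕ}

theorem sum_range_splice_of_le (h : j ≤ k) :
    ∑ i ∈ range j, splice k z' z'' i = ∑ i ∈ range j, z' i :=
  sum_congr rfl fun _ hi => if_pos ((mem_range.1 hi).trans_le h)

theorem sum_range_splice_of_ge (h : k ≤ j) :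
    ∑ i ∈ range j, splice k z' z'' i = ∑ i ∈ range k, z' i + ∑ i ∈ Ico k j, z'' i := by
  rw [← sum_range_add_sum_Ico _ h, sum_range_splice_of_le le_rfl]
  exact congrArg _ (sum_congr rfl fun _ hi => if_neg (mem_Ico.1 hi).1.not_gt)

end splice

theorem add_half_mem_Icc_of_abs_le {K : Type*} [Field K] [LinearOrder K] [IsStrictOrderedRing K]
    {x a b d ε : K} (hx : x ∈ Icc a b) (hd : |d| ≤ ε) :
    x + d / 2 ∈ Icc (a - ε / 2) (b + ε / 2) := by
  obtain ⟨hdl, hdr⟩ := abs_le.1 hd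
  constructor <;> linarith [hx.1, hx.2]

theorem stmt_8_general (m : ℕ) (u v : ℕ → ℝ)
    (z' z'' : ℕ → ℝ)
    (hz' : ∀ k < m, z' k = v k ∨ z' k = -u k)
    (hz'' : ∀ k < m, z'' k = v k ∨ z'' k = -u k)
    (x' x'' a' b' a'' b'' ε : ℝ)
    (hlive' : ∀ k ≤ m, x' + ∑ i ∈ Finset.range k, z' i ∈ Set.Icc a' b')
    (hlive'' : ∀ k ≤ m, x'' + ∑ i ∈ Finset.range k, z'' i ∈ Set.Icc a'' b'')
    (hclose : ∃ k ≤ m,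
      |(x' + ∑ i ∈ Finset.range k, z' i) - (x'' + ∑ i ∈ Finset.range k, z'' i)| ≤ ε) :
    ∃ (z : ℕ → ℝ) (x : ℝ), (∀ k < m, z k = v k ∨ z k = -u k) ∧
      (∀ k ≤ m, x + ∑ i ∈ Finset.range k, z i ∈
        Set.Icc (min a' a'' - ε / 2) (max b' b'' + ε / 2)) ∧
      x + (x + ∑ i ∈ Finset.range m, z i)
        = x' + (x'' + ∑ i ∈ Finset.range m, z'' i) := by
  obtain ⟨k, hkm, hclose⟩ := hclose
  set δ := (x'' + ∑ i ∈ range k, z'' i) - (x' + ∑ i ∈ range k, z' i)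
  have hδ : |δ| ≤ ε := by rwa [abs_sub_comm]
  have h_after (j : ℕ) (hkj : k ≤ j) : x' + δ / 2 + ∑ i ∈ range j, splice k z' z'' i
      = x'' + ∑ i ∈ range j, z'' i + -δ / 2 := by
    rw [sum_range_splice_of_ge hkj, ← sum_range_add_sum_Ico _ hkj]
    ring
  have hwiden : Icc (a' - ε / 2) (b' + ε / 2) ∪ Icc (a'' - ε / 2) (b'' + ε / 2)
      ⊆ Icc (min a' a'' - ε / 2) (max b' b'' + ε / 2) :=
    union_subset (Icc_subset_Icc (by gcongr; exact min_le_left ..) (by gcongr; exact le_max_left ..))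
      (Icc_subset_Icc (by gcongr; exact min_le_right ..) (by gcongr; exact le_max_right ..))
  refine ⟨splice k z' z'', x' + δ / 2, ?_, fun j hj => hwiden ?_, ?_⟩
  · exact splice_forall_lt (P := fun i w => w = v i ∨ w = -u i) hz' hz''
  · rcases le_total j k with hjk | hkj
    · left
      rw [sum_range_splice_of_le hjk, add_right_comm]
      exact add_half_mem_Icc_of_abs_le (hlive' j hj) hδ
    · right
      rw [h_after j hkj]
      exact add_half_mem_Icc_of_abs_le (hlive'' j hj) (by rwa [abs_neg])
  · rw [h_after m hkm]
    ring

theorem stmt_8 (m : ℕ) (hm : 1 ≤ m) (u v : ℕ → ℝ)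
    (hu : ∀ i < m, 0 ≤ u i) (hv : ∀ i < m, 0 ≤ v i)
    (z' z'' : ℕ → ℝ)
    (hz' : ∀ k < m, z' k = v k ∨ z' k = -u k)
    (hz'' : ∀ k < m, z'' k = v k ∨ z'' k = -u k)
    (x' x'' a' b' a'' b'' ε : ℝ) (hε : 0 < ε)
    (hlive' : ∀ k ≤ m, x' + ∑ i ∈ Finset.range k, z' i ∈ Set.Icc a' b')
    (hlive'' : ∀ k ≤ m, x'' + ∑ i ∈ Finset.range k, z'' i ∈ Set.Icc a'' b'')
    (hclose : ∃ k ≤ m,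
      |(x' + ∑ i ∈ Finset.range k, z' i) - (x'' + ∑ i ∈ Finset.range k, z'' i)| ≤ ε) :
    ∃ (z : ℕ → ℝ) (x : ℝ), (∀ k < m, z k = v k ∨ z k = -u k) ∧
      (∀ k ≤ m, x + ∑ i ∈ Finset.range k, z i ∈
        Set.Icc (min a' a'' - ε / 2) (max b' b'' + ε / 2)) ∧
      x + (x + ∑ i ∈ Finset.range m, z i)
        = x' + (x'' + ∑ i ∈ Finset.range m, z'' i) :=
  stmt_8_general m u v z' z'' hz' hz'' x' x'' a' b' a'' b'' ε hlive' hlive'' hclose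
end

section
/- Forward-greedy closeness (Case I of Lemma 4.3): Let p and p' be patterns in [0,D] for choice sequences z, z' over the same data, with d_k = u_k + v_k ≥ (1−δ)D, z_k = v_k, z'_k = −u_k, p(k−1) ≥ p'(k−1), p(k) ≥ p'(k). If additionally p(k) − d_k ≤ D − p(k) (the forward-greedy condition at step k for p), then 0 ≤ p(k−1) − p'(k−1) ≤ δD/2, so the patterns are (δD/2)-close. -/
theorem stmt_10 (m : ℕ) (D δ : ℝ) (hD : 0 < D) (hδ0 : 0 < δ) (hδ1 : δ < 1 / 2)
    (u v : ℕ → ℝ) (hu : ∀ i < m, 0 ≤ u i) (hv : ∀ i < m, 0 ≤ v i)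
    (p p' : ℕ → ℝ)
    (hlive : ∀ j ≤ m, p j ∈ Set.Icc 0 D)
    (hlive' : ∀ j ≤ m, p' j ∈ Set.Icc 0 D)
    (k : ℕ) (hk1 : 1 ≤ k) (hkm : k ≤ m)
    (hd : (1 - δ) * D ≤ u k + v k)
    (hstep : p k = p (k - 1) + v k)
    (hstep' : p' k = p' (k - 1) - u k)
    (hge : p' (k - 1) ≤ p (k - 1))
    (hge' : p' k ≤ p k)
    (hgreedy : p k - (u k + v k) ≤ D - p k) :
    0 ≤ p (k - 1) - p' (k - 1) ∧ p (k - 1) - p' (k - 1) ≤ δ * D / 2 := by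
  have h0' : 0 ≤ p' k := (hlive' k hkm).1
  constructor <;> linarith
end

section
/- Forward-greedy closeness (Case II of Lemma 4.3): With the setup of Case I (d_k ≥ (1−δ)D, z_k = v_k, z'_k = −u_k, p(k−1) ≥ p'(k−1), p(k) ≥ p'(k), patterns in [0,D]), if instead D − p'(k) − d_k ≤ p'(k) (the forward-greedy condition at step k for p'), then 0 ≤ p(k−1) − p'(k−1) ≤ δD/2. -/
theorem stmt_11 (m : ℕ) (D δ : ℝ) (hD : 0 < D) (hδ0 : 0 < δ) (hδ1 : δ < 1 / 2)
    (u v : ℕ → ℝ) (hu : ∀ i < m, 0 ≤ u i) (hv : ∀ i < m, 0 ≤ v i)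
    (p p' : ℕ → ℝ)
    (hlive : ∀ j ≤ m, p j ∈ Set.Icc 0 D)
    (hlive' : ∀ j ≤ m, p' j ∈ Set.Icc 0 D)
    (k : ℕ) (hk1 : 1 ≤ k) (hkm : k ≤ m)
    (hd : (1 - δ) * D ≤ u k + v k)
    (hstep : p k = p (k - 1) + v k)
    (hstep' : p' k = p' (k - 1) - u k)
    (hge : p' (k - 1) ≤ p (k - 1))
    (hge' : p' k ≤ p k)
    (hgreedy : D - p' k - (u k + v k) ≤ p' k) :
    0 ≤ p (k - 1) - p' (k - 1) ∧ p (k - 1) - p' (k - 1) ≤ δ * D / 2 := by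
  have hpk : p k ≤ D := (hlive k hkm).2
  constructor
  · linarith
  · linarith
end

section
/- Backward-greedy closeness (Case III of Lemma 4.3): Let p, p' be patterns in [0,D] with d_k ≥ (1−δ)D, p(k) = p(k−1) + v_k, p'(k) = p'(k−1) − u_k, and p(k−1) − p'(k−1) > δD/2. Suppose there exists q with k < q ≤ m such that p(q) = p(q−1) − u_q, p'(q) = p'(q−1) + v_q, q is minimal with z_q ≠ z'_q among indices > k, and p(q) ≤ p'(q). If moreover d_q ≤ D, then 0 ≤ p'(q) − p(q) < δD/2. -/
theorem stmt_12 (m : ℕ) (D δ : ℝ) (hD : 0 < D) (hδ0 : 0 < δ) (hδ1 : δ < 1 / 2)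
    (u v : ℕ → ℝ) (hu : ∀ i < m, 0 ≤ u i) (hv : ∀ i < m, 0 ≤ v i)
    (p p' : ℕ → ℝ)
    (hlive : ∀ j ≤ m, p j ∈ Set.Icc 0 D)
    (hlive' : ∀ j ≤ m, p' j ∈ Set.Icc 0 D)
    (k : ℕ) (hk1 : 1 ≤ k) (hkm : k ≤ m)
    (hd : (1 - δ) * D ≤ u k + v k)
    (hstep : p k = p (k - 1) + v k)
    (hstep' : p' k = p' (k - 1) - u k)
    (hfar : δ * D / 2 < p (k - 1) - p' (k - 1))
    (q : ℕ) (hkq : k < q) (hqm : q ≤ m)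
    (hstepq : p q = p (q - 1) - u q)
    (hstepq' : p' q = p' (q - 1) + v q)
    (hmin : ∀ i, k < i → i < q → p i - p (i - 1) = p' i - p' (i - 1))
    (hle : p q ≤ p' q)
    (hdq : u q + v q ≤ D) :
    0 ≤ p' q - p q ∧ p' q - p q < δ * D / 2 := by
  have key : ∀ i, k ≤ i → i < q → p i - p' i = p k - p' k := by
    intro i hki
    induction i, hki using Nat.le_induction with
    | base => intro _; rfl
    | succ i hi ih =>
      intro hiq
      have h1 : i < q := lt_of_le_of_lt (Nat.le_succ i) hiq
      have h2 := hmin (i + 1) (Nat.lt_succ_of_le hi) hiq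
      simp at h2
      have := ih h1
      linarith
  have hq1 : q - 1 < q := Nat.sub_lt (by omega) one_pos
  have hk' : k ≤ q - 1 := by omega
  have hkey := key (q - 1) hk' hq1
  constructor
  · linarith
  · linarith
end
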